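/- Let K, L be convex bodies in R^n contained in a ball of radius R and let 0 < ε < 1. If the surface tensors of K and L coincide for all ranks s with 0 ≤ s ≤ s_0, then d_D(S_{n-1}(K,·), S_{n-1}(L,·)) ≤ c(n, R, ε) s_0^{(ε−1)/2} for a constant c depending only on n, R and ε. -/

import Mathlib

open MeasureTheory Metric Real Filter
open scoped InnerProductSpace ENNReal NNReal Topology

noncomputable section

abbrev En (n : ℕ) := EuclideanSpace ℝ (Fin n)

abbrev Sph (n : ℕ) : Set (En n) := Metric.sphere 0 1

/-- `μ` is the surface area measure `S_{n-1}(K, ·)` of the convex body `K`. -/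
def IsSurfaceAreaMeasure {n : ℕ} (K : Set (En n)) (μ : Measure (Sph n)) : Prop :=
  ((interior K).Nonempty ∧ ∀ ω : Set (Sph n), MeasurableSet ω →
      μ ω = μH[((n : ℝ) - 1)]
        {x ∈ frontier K | ∃ u ∈ ω, ∀ y ∈ K, ⟪y - x, (u : En n)⟫_ℝ ≤ 0})
  ∨ (interior K = ∅ ∧ ∃ u u' : Sph n, (u' : En n) = -(u : En n) ∧
      (∃ c : ℝ, ∀ x ∈ K, ⟪x, (u : En n)⟫_ℝ = c) ∧
      μ = (μH[((n : ℝ) - 1)] K) • (Measure.dirac u + Measure.dirac u'))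

/-- The moment of a Borel measure on the sphere corresponding to the
multi-index `i : Fin n → ℕ`. -/
def sphMoment {n : ℕ} (μ : Measure (Sph n)) (i : Fin n → ℕ) : ℝ :=
  ∫ u, ∏ j, ((u : En n) j) ^ (i j) ∂μ

/-!
The argument yields the rate `s₀^{-1/2}`, which is stronger than `s₀^{(ε-1)/2}`.

*Mass bound.* Every point `x` of a convex body `K ⊆ B(0, R)` that has an outer normal `u` is the
image, under the `1`-Lipschitz metric projection onto `K`, of every point of the ray `x + t u`.
That ray meets one of the `2n` flat pieces `{z_j = ±R, maxᵢ |zᵢ| ≤ 3R}`, each a Lipschitz image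
of an `(n-1)`-dimensional cube, so the `(n-1)`-dimensional Hausdorff measure of these points, and
hence the total mass of `S_{n-1}(K, ·)`, is bounded by a constant `M(n, R)`.

*Approximation.* Extend a Lipschitz `f` on the sphere to `ℝⁿ` (McShane) and approximate it on the
cube `[-1, 1]ⁿ` by the tensor product Bernstein polynomial with degree `s` in each variable. The
Bernstein variance identity and Jensen's inequality give the uniform error `L √(4n/(s+1))`. The
polynomial has total degree `≤ n s`, so with `s = ⌊s₀/n⌋` its integrals against `S_{n-1}(K, ·)` and
`S_{n-1}(L, ·)` agree. The two integrals of `f` therefore differ by at most `4 n M L s₀^{-1/2}`.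
-/

section MetricProjection

variable {E : Type*} [NormedAddCommGroup E] [InnerProductSpace ℝ E] {K : Set E} {P : E → E}

/-- The nearest-point map onto a convex set, through its variational characterization. -/
def IsMetricProjection (K : Set E) (P : E → E) : Prop :=
  ∀ z, P z ∈ K ∧ ∀ w ∈ K, ⟪z - P z, w - P z⟫_ℝ ≤ 0

theorem exists_isMetricProjection (hK : Convex ℝ K) (hKc : IsComplete K) (hne : K.Nonempty) :
    ∃ P, IsMetricProjection K P := by
  choose P hPK hPmin using exists_norm_eq_iInf_of_complete_convex hne hKc hK
  exact ⟨P, fun z => ⟨hPK z, (norm_eq_iInf_iff_real_inner_le_zero hK (hPK z)).1 (hPmin z)⟩⟩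

namespace IsMetricProjection

theorem lipschitzWith_one (hP : IsMetricProjection K P) : LipschitzWith 1 P := by
  refine LipschitzWith.of_dist_le_mul fun z z' => ?_
  rw [NNReal.coe_one, one_mul, dist_eq_norm, dist_eq_norm]
  have h₁ := (hP z).2 (P z') (hP z').1
  have h₂ := (hP z').2 (P z) (hP z).1
  have hfirm : ‖P z - P z'‖ ^ 2 ≤ ‖z - z'‖ * ‖P z - P z'‖ := by
    calc ‖P z - P z'‖ ^ 2 ≤ ⟪z - z', P z - P z'⟫_ℝ := by
          rw [← real_inner_self_eq_norm_sq]
          simp only [inner_sub_left, inner_sub_right] at h₁ h₂ ⊢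
          linarith
      _ ≤ ‖z - z'‖ * ‖P z - P z'‖ := real_inner_le_norm _ _
  nlinarith [norm_nonneg (P z - P z'), norm_nonneg (z - z')]

theorem apply_add_smul (hP : IsMetricProjection K P) {x u : E} (hx : x ∈ K)
    (hu : ∀ y ∈ K, ⟪y - x, u⟫_ℝ ≤ 0) {t : ℝ} (ht : 0 ≤ t) : P (x + t • u) = x := by
  have h₁ := (hP (x + t • u)).2 x hx
  have h₂ := mul_nonpos_of_nonneg_of_nonpos ht (hu _ (hP (x + t • u)).1)
  have hsq : ‖P (x + t • u) - x‖ ^ 2 ≤ 0 := by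
    rw [← real_inner_self_eq_norm_sq]
    simp only [inner_sub_left, inner_sub_right, inner_add_left, real_inner_smul_left,
      real_inner_comm u] at h₁ h₂ ⊢
    linarith
  exact sub_eq_zero.1 (norm_eq_zero.1 (pow_eq_zero_iff two_ne_zero |>.1
    (le_antisymm hsq (sq_nonneg _))))

end IsMetricProjection

end MetricProjection

def coordFace {m : ℕ} (j : Fin (m + 1)) (v a : ℝ) : Set (En (m + 1)) :=
  {z | z j = v ∧ ∀ i, |z i| ≤ a}

/-- `m + 1` bounds the Lipschitz constant `√(m + 1)` of the chart `(Fin m → ℝ, sup norm) → face`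
that inserts the fixed coordinate, and `(2a)^m` is the volume of the cube of the free
coordinates. -/
def coordFaceBound (m : ℕ) (a : ℝ) : ℝ≥0∞ :=
  ((m + 1 : ℕ) : ℝ≥0∞) ^ m * ENNReal.ofReal ((2 * a) ^ m)

theorem hausdorffMeasure_coordFace_le {m : ℕ} (j : Fin (m + 1)) (v : ℝ) {a : ℝ} (ha : 0 ≤ a) :
    μH[m] (coordFace j v a) ≤ coordFaceBound m a := by
  set φ : (Fin m → ℝ) → En (m + 1) := fun y => WithLp.toLp 2 (j.insertNth v y)
  have hφ : LipschitzWith (m + 1 : ℕ) φ := by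
    have hins : LipschitzWith 1 (Fin.insertNth (α := fun _ => ℝ) j v) :=
      LipschitzWith.of_dist_le_mul fun y y' => by simp [Fin.dist_insertNth_insertNth]
    refine ((PiLp.lipschitzWith_toLp 2 _).comp hins).weaken ?_
    simp only [Fintype.card_fin, mul_one]
    calc ((m + 1 : ℕ) : ℝ≥0) ^ (1 / (2 : ℝ≥0∞)).toReal
        ≤ ((m + 1 : ℕ) : ℝ≥0) ^ (1 : ℝ) :=
          NNReal.rpow_le_rpow_of_exponent_le (by simp) (by norm_num)
      _ = _ := NNReal.rpow_one _
  have hsub : coordFace j v a ⊆ φ '' closedBall 0 a := by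
    rintro z ⟨hzj, hza⟩
    refine ⟨j.removeNth z, ?_, ?_⟩
    · rw [mem_closedBall_zero_iff, pi_norm_le_iff_of_nonneg ha]
      exact fun i => by simpa [Fin.removeNth] using hza _
    · simp [φ, ← hzj]
  calc μH[m] (coordFace j v a) ≤ μH[m] (φ '' closedBall 0 a) := measure_mono hsub
    _ ≤ ((m + 1 : ℕ) : ℝ≥0∞) ^ (m : ℝ) * μH[m] (closedBall (0 : Fin m → ℝ) a) := by
      simpa using hφ.hausdorffMeasure_image_le (Nat.cast_nonneg m) (closedBall 0 a)
    _ = coordFaceBound m a := by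
      have hvol := hausdorffMeasure_pi_real (ι := Fin m)
      rw [Fintype.card_fin] at hvol
      rw [hvol, Real.volume_pi_closedBall 0 ha, Fintype.card_fin, ENNReal.rpow_natCast,
        coordFaceBound]

/-- Follow the ray until the coordinate `j` with maximal `|u j|` reaches `±R`: meanwhile every
coordinate moves by at most `2R`. -/
theorem exists_add_smul_mem_coordFace {m : ℕ} {R : ℝ} {x u : En (m + 1)} (hx : ‖x‖ ≤ R)
    (hu : u ≠ 0) :
    ∃ t : ℝ, 0 ≤ t ∧ ∃ j, x + t • u ∈ coordFace j R (3 * R) ∪ coordFace j (-R) (3 * R) := by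
  obtain ⟨j, -, hj⟩ := Finset.exists_max_image Finset.univ (fun i => |u i|) Finset.univ_nonempty
  have huj : u j ≠ 0 := by
    intro h0
    refine hu (PiLp.ext fun i => ?_)
    simpa [h0] using hj i (Finset.mem_univ i)
  have hxi : ∀ i, |x i| ≤ R := fun i => (PiLp.norm_apply_le x i).trans hx
  have hR : 0 ≤ R := (norm_nonneg x).trans hx
  have hmem : ∀ v, |v| ≤ R → 0 ≤ (v - x j) / u j →
      x + ((v - x j) / u j) • u ∈ coordFace j v (3 * R) := by
    intro v hv ht
    have htu : (v - x j) / u j * u j = v - x j := div_mul_cancel₀ _ huj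
    refine ⟨by simp [htu], fun i => ?_⟩
    calc |x i + (v - x j) / u j * u i| ≤ |x i| + (v - x j) / u j * |u i| :=
          (abs_add_le _ _).trans_eq (by rw [abs_mul, abs_of_nonneg ht])
      _ ≤ R + (v - x j) / u j * |u j| :=
          add_le_add (hxi i) (mul_le_mul_of_nonneg_left (hj i (Finset.mem_univ i)) ht)
      _ = R + |v - x j| := by rw [← abs_of_nonneg ht, ← abs_mul, htu]
      _ ≤ 3 * R := by linarith [abs_sub v (x j), hxi j]
  rcases huj.lt_or_gt with hneg | hpos
  · have ht : 0 ≤ (-R - x j) / u j :=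
      div_nonneg_of_nonpos (by linarith [neg_abs_le (x j), hxi j]) hneg.le
    exact ⟨_, ht, j, Or.inr (hmem (-R) (abs_le.2 ⟨by linarith, by linarith⟩) ht)⟩
  · have ht : 0 ≤ (R - x j) / u j := div_nonneg (by linarith [le_abs_self (x j), hxi j]) hpos.le
    exact ⟨_, ht, j, Or.inl (hmem R (abs_le.2 ⟨by linarith, by linarith⟩) ht)⟩

def supportPoints {E : Type*} [NormedAddCommGroup E] [InnerProductSpace ℝ E] (K : Set E) :
    Set E :=
  {x ∈ K | ∃ u : E, u ≠ 0 ∧ ∀ y ∈ K, ⟪y - x, u⟫_ℝ ≤ 0}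

theorem hausdorffMeasure_supportPoints_le {m : ℕ} {K : Set (En (m + 1))}
    (hK : Convex ℝ K) (hKc : IsComplete K) {R : ℝ} (hKR : K ⊆ closedBall 0 R) :
    μH[m] (supportPoints K) ≤ 2 * (m + 1) * coordFaceBound m (3 * R) := by
  rcases K.eq_empty_or_nonempty with rfl | hne
  · simp [supportPoints]
  obtain ⟨P, hP⟩ := exists_isMetricProjection hK hKc hne
  set F : Fin (m + 1) → Set (En (m + 1)) :=
    fun j => coordFace j R (3 * R) ∪ coordFace j (-R) (3 * R)
  have hR : 0 ≤ R := by
    obtain ⟨x, hx⟩ := hne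
    exact dist_nonneg.trans (mem_closedBall.1 (hKR hx))
  have hsub : supportPoints K ⊆ ⋃ j, P '' F j := by
    rintro x ⟨hx, u, hu, hnormal⟩
    obtain ⟨t, ht, j, hmem⟩ :=
      exists_add_smul_mem_coordFace (mem_closedBall_zero_iff.1 (hKR hx)) hu
    exact Set.mem_iUnion.2 ⟨j, _, hmem, hP.apply_add_smul hx hnormal ht⟩
  have hF : ∀ j, μH[m] (P '' F j) ≤ 2 * coordFaceBound m (3 * R) := fun j =>
    calc μH[m] (P '' F j) ≤ μH[m] (F j) := by
          simpa using hP.lipschitzWith_one.hausdorffMeasure_image_le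
            (Nat.cast_nonneg m) (F j)
      _ ≤ coordFaceBound m (3 * R) + coordFaceBound m (3 * R) :=
          (measure_union_le _ _).trans (add_le_add
            (hausdorffMeasure_coordFace_le j _ (by positivity))
            (hausdorffMeasure_coordFace_le j _ (by positivity)))
      _ = 2 * coordFaceBound m (3 * R) := (two_mul _).symm
  calc _ ≤ μH[m] (⋃ j, P '' F j) := measure_mono hsub
    _ ≤ ∑ j, μH[m] (P '' F j) := measure_iUnion_fintype_le _ _
    _ ≤ ∑ _j : Fin (m + 1), 2 * coordFaceBound m (3 * R) := Finset.sum_le_sum fun j _ => hF j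
    _ = 2 * (m + 1) * coordFaceBound m (3 * R) := by
        simp only [Finset.sum_const, Finset.card_univ, Fintype.card_fin, nsmul_eq_mul,
          Nat.cast_add, Nat.cast_one]
        ring

theorem IsSurfaceAreaMeasure.measure_univ_le {m : ℕ} {K : Set (En (m + 1))}
    {μ : Measure (Sph (m + 1))} (hμ : IsSurfaceAreaMeasure K μ) (hK : Convex ℝ K)
    (hKc : IsCompact K) {R : ℝ} (hKR : K ⊆ closedBall 0 R) :
    μ Set.univ ≤ 2 * (2 * (m + 1) * coordFaceBound m (3 * R)) := by
  have hdim : ((m + 1 : ℕ) : ℝ) - 1 = m := by push_cast; ring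
  have hsupp := hausdorffMeasure_supportPoints_le hK hKc.isComplete hKR
  unfold IsSurfaceAreaMeasure at hμ
  rw [hdim] at hμ
  rcases hμ with ⟨-, hμ⟩ | ⟨-, u, u', -, ⟨c, hc⟩, rfl⟩
  · refine (hμ Set.univ MeasurableSet.univ).le.trans (le_trans (measure_mono ?_) (hsupp.trans ?_))
    · rintro x ⟨hx, u, -, hu⟩
      exact ⟨hKc.isClosed.frontier_subset hx, u, ne_zero_of_mem_unit_sphere u, hu⟩
    · exact le_mul_of_one_le_left' one_le_two
  · have hKsub : K ⊆ supportPoints K :=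
      fun x hx => ⟨hx, u, ne_zero_of_mem_unit_sphere u, fun y hy => by
        rw [inner_sub_left, hc x hx, hc y hy, sub_self]⟩
    simp only [Measure.smul_apply, Measure.add_apply, measure_univ, smul_eq_mul]
    rw [one_add_one_eq_two, mul_comm]
    gcongr
    exact (measure_mono hKsub).trans hsupp

theorem eval_bernsteinPolynomial_nonneg (s k : ℕ) {t : ℝ} (h₀ : 0 ≤ t) (h₁ : t ≤ 1) :
    0 ≤ (bernsteinPolynomial ℝ s k).eval t :=
  bernstein_nonneg (x := ⟨t, h₀, h₁⟩)

theorem sum_eval_bernsteinPolynomial (s : ℕ) (t : ℝ) :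
    ∑ k ∈ Finset.range (s + 1), (bernsteinPolynomial ℝ s k).eval t = 1 := by
  simpa [Polynomial.eval_finsetSum] using congrArg (Polynomial.eval t) (bernsteinPolynomial.sum ℝ s)

theorem sum_eval_bernsteinPolynomial_mul_sq_le (s : ℕ) {y : ℝ} (hy : |y| ≤ 1) :
    ∑ k ∈ Finset.range (s + 1),
      (bernsteinPolynomial ℝ s k).eval ((y + 1) / 2) * (y - (2 * k / s - 1)) ^ 2
      ≤ 4 / ((s : ℝ) + 1) := by
  obtain ⟨hy₀, hy₁⟩ := abs_le.1 hy
  rcases Nat.eq_zero_or_pos s with rfl | hs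
  · -- the only node is `2 * 0 / 0 - 1 = -1`, since `x / 0 = 0`
    simpa [bernsteinPolynomial] using
      (by nlinarith : (y + 1) ^ 2 ≤ 4)
  have hs' : (0 : ℝ) < s := Nat.cast_pos.2 hs
  have hvar : ∑ k ∈ Finset.range (s + 1), (s * ((y + 1) / 2) - k) ^ 2 *
      (bernsteinPolynomial ℝ s k).eval ((y + 1) / 2) = s * ((y + 1) / 2) * (1 - (y + 1) / 2) := by
    simpa [Polynomial.eval_finsetSum] using
      congrArg (Polynomial.eval ((y + 1) / 2)) (bernsteinPolynomial.variance ℝ s)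
  calc _ = 4 / (s : ℝ) ^ 2 * ∑ k ∈ Finset.range (s + 1), (s * ((y + 1) / 2) - k) ^ 2 *
        (bernsteinPolynomial ℝ s k).eval ((y + 1) / 2) := by
        rw [Finset.mul_sum]
        refine Finset.sum_congr rfl fun k _ => ?_
        field_simp
        ring
    _ = (1 - y ^ 2) / s := by rw [hvar]; field_simp; ring
    _ ≤ 1 / s := by gcongr; nlinarith
    _ ≤ 4 / (s + 1) := by
        rw [div_le_div_iff₀ hs' (by positivity)]
        have : (1 : ℝ) ≤ s := Nat.one_le_cast.2 hs
        linarith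

theorem Finset.sum_piFinset_prod_mul_apply {ι α R : Type*} [Fintype ι] [DecidableEq ι]
    [CommSemiring R] (t : Finset α) (b : ι → α → R) (hb : ∀ i, ∑ a ∈ t, b i a = 1) (j : ι)
    (φ : α → R) :
    ∑ k ∈ Fintype.piFinset (fun _ => t), (∏ i, b i (k i)) * φ (k j) = ∑ a ∈ t, b j a * φ a := by
  set c := Function.update b j fun a => b j a * φ a
  have hcj : c j = fun a => b j a * φ a := Function.update_self ..
  have hc_ne : ∀ i ∈ ({j}ᶜ : Finset ι), c i = b i := fun i hi =>
    Function.update_of_ne (by simpa using hi) ..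
  have hc : ∀ k : ι → α, ∏ i, c i (k i) = (∏ i, b i (k i)) * φ (k j) := fun k => by
    rw [Fintype.prod_eq_mul_prod_compl j, Fintype.prod_eq_mul_prod_compl j (fun i => b i (k i)),
      Finset.prod_congr rfl fun i hi => by rw [hc_ne i hi], hcj]
    ring
  rw [Finset.sum_congr rfl fun k _ => (hc k).symm, ← Finset.prod_univ_sum,
    Fintype.prod_eq_mul_prod_compl j, hcj,
    Finset.prod_congr rfl fun i hi => by rw [hc_ne i hi, hb], Finset.prod_const_one, mul_one]

theorem Finset.sum_mul_le_sqrt_sum_mul_sq {ι : Type*} {s : Finset ι} {w f : ι → ℝ}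
    (hw₀ : ∀ i ∈ s, 0 ≤ w i) (hw₁ : ∑ i ∈ s, w i = 1) :
    ∑ i ∈ s, w i * f i ≤ √(∑ i ∈ s, w i * f i ^ 2) := by
  refine (le_abs_self _).trans (Real.abs_le_sqrt ?_)
  have := Finset.sum_sq_le_sum_mul_sum_of_sq_le_mul s hw₀
    (fun i hi => mul_nonneg (hw₀ i hi) (sq_nonneg (f i))) (r := fun i => w i * f i)
    (fun i _ => (by ring : (w i * f i) ^ 2 = w i * (w i * f i ^ 2)).le)
  rwa [hw₁, one_mul] at this

theorem bernsteinPolynomial.natDegree_le {R : Type*} [CommRing R] (s k : ℕ) :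
    (bernsteinPolynomial R s k).natDegree ≤ s := by
  rcases lt_or_ge s k with hsk | hks
  · simp [bernsteinPolynomial.eq_zero_of_lt R hsk]
  unfold bernsteinPolynomial
  calc _ ≤ (0 + k) + (s - k) * 1 := by
        refine Polynomial.natDegree_mul_le.trans (add_le_add ?_ ?_)
        · exact Polynomial.natDegree_mul_le.trans
            (add_le_add (by simp) (Polynomial.natDegree_X_pow_le k))
        · exact Polynomial.natDegree_pow_le.trans (Nat.mul_le_mul_left _
            ((Polynomial.natDegree_sub_le _ _).trans (by simpa using Polynomial.natDegree_X_le)))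
    _ = s := by omega

theorem MvPolynomial.totalDegree_aeval_le {R σ : Type*} [CommSemiring R] (q : MvPolynomial σ R)
    (p : Polynomial R) :
    (Polynomial.aeval q p).totalDegree ≤ p.natDegree * q.totalDegree := by
  rw [Polynomial.aeval_eq_sum_range]
  refine MvPolynomial.totalDegree_finsetSum_le fun i hi => ?_
  refine (MvPolynomial.totalDegree_smul_le _ _).trans ((MvPolynomial.totalDegree_pow _ _).trans ?_)
  exact Nat.mul_le_mul_right _ (Nat.lt_succ_iff.1 (Finset.mem_range.1 hi))

section MultivariateBernstein

variable {n : ℕ}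

def bernsteinNode (s : ℕ) (k : Fin n → ℕ) : En n := WithLp.toLp 2 fun j => 2 * k j / s - 1

@[simp]
theorem bernsteinNode_apply (s : ℕ) (k : Fin n → ℕ) (j : Fin n) :
    bernsteinNode s k j = 2 * k j / s - 1 := rfl

/-- Tensor product Bernstein polynomial, moved from `[0, 1]ⁿ` to the cube `[-1, 1]ⁿ` by
`y ↦ (y + 1) / 2`. -/
def bernsteinMvPolynomial (s : ℕ) (g : En n → ℝ) : MvPolynomial (Fin n) ℝ :=
  ∑ k ∈ Fintype.piFinset fun _ => Finset.range (s + 1),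
    MvPolynomial.C (g (bernsteinNode s k)) *
      ∏ j, Polynomial.aeval (MvPolynomial.C 2⁻¹ * (MvPolynomial.X j + 1))
        (bernsteinPolynomial ℝ s (k j))

theorem eval_bernsteinMvPolynomial (s : ℕ) (g : En n → ℝ) (x : Fin n → ℝ) :
    MvPolynomial.eval x (bernsteinMvPolynomial s g) =
      ∑ k ∈ Fintype.piFinset (fun _ => Finset.range (s + 1)),
        (∏ j, (bernsteinPolynomial ℝ s (k j)).eval ((x j + 1) / 2)) * g (bernsteinNode s k) := by
  have heval : ∀ (q : MvPolynomial (Fin n) ℝ) (p : Polynomial ℝ),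
      MvPolynomial.eval x (Polynomial.aeval q p) = p.eval (MvPolynomial.eval x q) := fun q p => by
    rw [Polynomial.aeval_def, Polynomial.hom_eval₂]
    congr 1
    ext
    simp
  simp only [bernsteinMvPolynomial, map_sum, map_mul, map_prod, heval, MvPolynomial.eval_C,
    MvPolynomial.eval_X, map_add, map_one]
  refine Finset.sum_congr rfl fun k _ => ?_
  ring_nf

theorem totalDegree_bernsteinMvPolynomial_le (s : ℕ) (g : En n → ℝ) :
    (bernsteinMvPolynomial s g).totalDegree ≤ n * s := by
  refine MvPolynomial.totalDegree_finsetSum_le fun k _ => ?_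
  refine (MvPolynomial.totalDegree_mul _ _).trans ?_
  rw [MvPolynomial.totalDegree_C, zero_add]
  have hq : ∀ j : Fin n, (MvPolynomial.C (2⁻¹ : ℝ) * (MvPolynomial.X j + 1)).totalDegree ≤ 1 :=
    fun j => (MvPolynomial.totalDegree_mul _ _).trans (by
      rw [MvPolynomial.totalDegree_C, zero_add]
      exact (MvPolynomial.totalDegree_add _ _).trans (by simp [MvPolynomial.totalDegree_X]))
  calc _ ≤ ∑ j, (bernsteinPolynomial ℝ s (k j)).natDegree * 1 :=
        (MvPolynomial.totalDegree_finsetProd _ _).trans (Finset.sum_le_sum fun j _ =>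
          (MvPolynomial.totalDegree_aeval_le _ _).trans (Nat.mul_le_mul_left _ (hq j)))
    _ ≤ ∑ _j : Fin n, s := Finset.sum_le_sum fun j _ => by
        simpa using bernsteinPolynomial.natDegree_le s (k j)
    _ = n * s := by simp

theorem abs_sub_eval_bernsteinMvPolynomial_le {g : En n → ℝ} {L : ℝ≥0} (hg : LipschitzWith L g)
    (s : ℕ) {x : En n} (hx : ∀ j, |x j| ≤ 1) :
    |g x - MvPolynomial.eval x.ofLp (bernsteinMvPolynomial s g)| ≤ L * √(4 * n / (s + 1)) := by
  set S := Fintype.piFinset fun _ : Fin n => Finset.range (s + 1)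
  set b : Fin n → ℕ → ℝ := fun j a => (bernsteinPolynomial ℝ s a).eval ((x j + 1) / 2)
  set w : (Fin n → ℕ) → ℝ := fun k => ∏ j, b j (k j)
  have hb : ∀ j, ∑ a ∈ Finset.range (s + 1), b j a = 1 := fun j => sum_eval_bernsteinPolynomial _ _
  have hw₀ : ∀ k, 0 ≤ w k := fun k => Finset.prod_nonneg fun j _ => by
    obtain ⟨h₀, h₁⟩ := abs_le.1 (hx j)
    exact eval_bernsteinPolynomial_nonneg _ _ (by linarith) (by linarith)
  have hw₁ : ∑ k ∈ S, w k = 1 := by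
    rw [← Finset.prod_univ_sum]
    exact Finset.prod_eq_one fun j _ => hb j
  have hsecond : ∑ k ∈ S, w k * ‖x - bernsteinNode s k‖ ^ 2 ≤ 4 * n / (s + 1) :=
    calc _ = ∑ j, ∑ k ∈ S, w k * (x j - (2 * k j / s - 1)) ^ 2 := by
          simp_rw [EuclideanSpace.norm_sq_eq, Finset.mul_sum]
          rw [Finset.sum_comm]
          simp only [PiLp.sub_apply, bernsteinNode_apply, norm_eq_abs, sq_abs]
      _ = ∑ j, ∑ a ∈ Finset.range (s + 1), b j a * (x j - (2 * a / s - 1)) ^ 2 :=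
          Finset.sum_congr rfl fun j _ => Finset.sum_piFinset_prod_mul_apply _ b hb j
            (fun a => (x j - (2 * a / s - 1)) ^ 2)
      _ ≤ ∑ _j : Fin n, 4 / ((s : ℝ) + 1) :=
          Finset.sum_le_sum fun j _ => sum_eval_bernsteinPolynomial_mul_sq_le s (hx j)
      _ = 4 * n / (s + 1) := by
          simp only [Finset.sum_const, Finset.card_univ, Fintype.card_fin, nsmul_eq_mul]
          ring
  calc _ = |∑ k ∈ S, w k * (g x - g (bernsteinNode s k))| := by
        simp_rw [eval_bernsteinMvPolynomial, mul_sub, Finset.sum_sub_distrib, ← Finset.sum_mul,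
          hw₁, one_mul]
        rfl
    _ ≤ ∑ k ∈ S, w k * (L * ‖x - bernsteinNode s k‖) := by
        refine (Finset.abs_sum_le_sum_abs _ _).trans (Finset.sum_le_sum fun k _ => ?_)
        rw [abs_mul, abs_of_nonneg (hw₀ k), ← dist_eq_norm, ← Real.dist_eq]
        exact mul_le_mul_of_nonneg_left (hg.dist_le_mul _ _) (hw₀ k)
    _ = L * ∑ k ∈ S, w k * ‖x - bernsteinNode s k‖ := by
        rw [Finset.mul_sum]; exact Finset.sum_congr rfl fun k _ => by ring
    _ ≤ L * √(4 * n / (s + 1)) := by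
        gcongr
        exact (Finset.sum_mul_le_sqrt_sum_mul_sq (fun k _ => hw₀ k) hw₁).trans
          (Real.sqrt_le_sqrt hsecond)

end MultivariateBernstein

theorem LipschitzWith.exists_extend_real {α : Type*} [PseudoMetricSpace α] {s : Set α}
    {f : s → ℝ} {K : ℝ≥0} (hf : LipschitzWith K f) :
    ∃ g : α → ℝ, LipschitzWith K g ∧ ∀ x : s, g x = f x := by
  have hext : ∀ x : s, Function.extend Subtype.val f 0 x = f x :=
    Subtype.val_injective.extend_apply f 0
  have hrestrict : s.domRestrict (Function.extend Subtype.val f 0) = f := funext hext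
  obtain ⟨g, hg, hfg⟩ :=
    (lipschitzOnWith_iff_restrict.2 (by rw [hrestrict]; exact hf) :
      LipschitzOnWith K (Function.extend Subtype.val f 0) s).extend_real
  exact ⟨g, hg, fun x => (hfg x.2).symm.trans (hext x)⟩

theorem sqrt_four_mul_div_le_rpow {n s s₀ : ℕ} (hs₀ : 0 < s₀) (h : s₀ ≤ n * (s + 1)) :
    √(4 * n / (s + 1)) ≤ 2 * n * (s₀ : ℝ) ^ (-(1 / 2 : ℝ)) := by
  have hs₀' : (0 : ℝ) < s₀ := Nat.cast_pos.2 hs₀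
  have h' : (s₀ : ℝ) ≤ n * (s + 1) := by exact_mod_cast h
  rw [Real.rpow_neg hs₀'.le, ← Real.sqrt_eq_rpow, ← div_eq_mul_inv,
    ← Real.sqrt_sq (by positivity : (0 : ℝ) ≤ 2 * n), ← Real.sqrt_div' _ hs₀'.le]
  refine Real.sqrt_le_sqrt ?_
  rw [div_le_div_iff₀ (by positivity) hs₀']
  nlinarith [Nat.cast_nonneg (α := ℝ) n]

section Moments

variable {n : ℕ}

theorem integral_eval_eq_sum_coeff_mul_sphMoment (μ : Measure (Sph n)) [IsFiniteMeasure μ]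
    (p : MvPolynomial (Fin n) ℝ) :
    ∫ u, MvPolynomial.eval (u : En n).ofLp p ∂μ =
      ∑ m ∈ p.support, MvPolynomial.coeff m p * sphMoment μ m := by
  simp_rw [MvPolynomial.eval_eq']
  rw [integral_finsetSum _ fun m _ => (Continuous.integrable_of_hasCompactSupport (by fun_prop)
    (HasCompactSupport.of_compactSpace _))]
  exact Finset.sum_congr rfl fun m _ => integral_const_mul _ _

theorem integral_eval_eq_of_sphMoment_eq {μ ν : Measure (Sph n)} [IsFiniteMeasure μ]
    [IsFiniteMeasure ν] {d : ℕ}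
    (hμν : ∀ i : Fin n → ℕ, ∑ j, i j ≤ d → sphMoment μ i = sphMoment ν i)
    {p : MvPolynomial (Fin n) ℝ} (hp : p.totalDegree ≤ d) :
    ∫ u, MvPolynomial.eval (u : En n).ofLp p ∂μ = ∫ u, MvPolynomial.eval (u : En n).ofLp p ∂ν := by
  rw [integral_eval_eq_sum_coeff_mul_sphMoment, integral_eval_eq_sum_coeff_mul_sphMoment]
  refine Finset.sum_congr rfl fun m hm => congrArg _ (hμν m ?_)
  simpa [Finsupp.sum_fintype] using (MvPolynomial.le_totalDegree hm).trans hp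

theorem abs_integral_sub_integral_le_of_sphMoment_eq {μ ν : Measure (Sph n)} [IsFiniteMeasure μ]
    [IsFiniteMeasure ν] {M : ℝ} (hμ : μ.real Set.univ ≤ M) (hν : ν.real Set.univ ≤ M) {s : ℕ}
    (hμν : ∀ i : Fin n → ℕ, ∑ j, i j ≤ n * s → sphMoment μ i = sphMoment ν i)
    {f : Sph n → ℝ} {L : ℝ≥0} (hf : LipschitzWith L f) :
    |∫ u, f u ∂μ - ∫ u, f u ∂ν| ≤ 2 * M * (L * √(4 * n / (s + 1))) := by
  obtain ⟨g, hg, hgf⟩ := hf.exists_extend_real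
  set p := bernsteinMvPolynomial s g
  set δ := L * √(4 * n / (s + 1))
  have happrox : ∀ u : Sph n, |f u - MvPolynomial.eval (u : En n).ofLp p| ≤ δ := fun u => by
    rw [← hgf u]
    refine abs_sub_eval_bernsteinMvPolynomial_le hg s fun j => ?_
    exact (PiLp.norm_apply_le (u : En n) j).trans (norm_eq_of_mem_sphere u).le
  have hPcont : Continuous fun u : Sph n => MvPolynomial.eval (u : En n).ofLp p :=
    (MvPolynomial.continuous_eval p).comp ((PiLp.continuous_ofLp 2 _).comp continuous_subtype_val)
  have hint : ∀ (ρ : Measure (Sph n)) [IsFiniteMeasure ρ], ρ.real Set.univ ≤ M →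
      |∫ u, f u ∂ρ - ∫ u, MvPolynomial.eval (u : En n).ofLp p ∂ρ| ≤ δ * M := fun ρ _ hρ => by
    rw [← integral_sub (hf.continuous.integrable_of_hasCompactSupport
      (HasCompactSupport.of_compactSpace _)) (hPcont.integrable_of_hasCompactSupport
      (HasCompactSupport.of_compactSpace _))]
    refine (norm_integral_le_of_norm_le_const (Eventually.of_forall fun u =>
      (Real.norm_eq_abs _).trans_le (happrox u))).trans ?_
    exact mul_le_mul_of_nonneg_left hρ (by positivity)
  have hpoly :
      ∫ u, MvPolynomial.eval (u : En n).ofLp p ∂μ = ∫ u, MvPolynomial.eval (u : En n).ofLp p ∂ν :=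
    integral_eval_eq_of_sphMoment_eq hμν (totalDegree_bernsteinMvPolynomial_le s g)
  calc _ = |(∫ u, f u ∂μ - ∫ u, MvPolynomial.eval (u : En n).ofLp p ∂μ) -
        (∫ u, f u ∂ν - ∫ u, MvPolynomial.eval (u : En n).ofLp p ∂ν)| := by
        rw [hpoly, sub_sub_sub_cancel_right]
    _ ≤ δ * M + δ * M := (abs_sub _ _).trans (add_le_add (hint μ hμ) (hint ν hν))
    _ = 2 * M * δ := by ring

theorem abs_integral_sub_integral_le_rpow_of_sphMoment_eq (hn : 0 < n)
    {μ ν : Measure (Sph n)} [IsFiniteMeasure μ] [IsFiniteMeasure ν] {M : ℝ}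
    (hμ : μ.real Set.univ ≤ M) (hν : ν.real Set.univ ≤ M) {s₀ : ℕ} (hs₀ : 0 < s₀)
    (hμν : ∀ i : Fin n → ℕ, ∑ j, i j ≤ s₀ → sphMoment μ i = sphMoment ν i)
    {f : Sph n → ℝ} {L : ℝ≥0} (hf : LipschitzWith L f) :
    |∫ u, f u ∂μ - ∫ u, f u ∂ν| ≤ 4 * n * M * L * (s₀ : ℝ) ^ (-(1 / 2 : ℝ)) := by
  have hM : 0 ≤ M := measureReal_nonneg.trans hμ
  calc _ ≤ 2 * M * (L * √(4 * n / ((s₀ / n : ℕ) + 1))) :=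
        abs_integral_sub_integral_le_of_sphMoment_eq hμ hν
          (fun i hi => hμν i (hi.trans (Nat.mul_div_le s₀ n))) hf
    _ ≤ 2 * M * (L * (2 * n * (s₀ : ℝ) ^ (-(1 / 2 : ℝ)))) := by
        gcongr
        exact sqrt_four_mul_div_le_rpow hs₀ (Nat.lt_mul_div_succ s₀ hn).le
    _ = 4 * n * M * L * (s₀ : ℝ) ^ (-(1 / 2 : ℝ)) := by ring

end Moments

theorem stmt12_general {n : ℕ} (hn : 2 ≤ n) (R : ℝ)
    (ε : ℝ) (hε0 : 0 < ε) :
    ∃ c : ℝ, 0 < c ∧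
      ∀ K L : Set (En n),
        Convex ℝ K → IsCompact K → K.Nonempty → K ⊆ Metric.closedBall 0 R →
        Convex ℝ L → IsCompact L → L.Nonempty → L ⊆ Metric.closedBall 0 R →
      ∀ μK μL : Measure (Sph n),
        IsSurfaceAreaMeasure K μK → IsSurfaceAreaMeasure L μL →
      ∀ s₀ : ℕ, 1 ≤ s₀ →
        (∀ i : Fin n → ℕ, (∑ j, i j) ≤ s₀ → sphMoment μK i = sphMoment μL i) →
      ∀ (f : Sph n → ℝ) (bf Lf : ℝ),
        (∀ u, |f u| ≤ bf) → (∀ u v, |f u - f v| ≤ Lf * dist u v) →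
        bf + Lf ≤ 1 →
        |∫ u, f u ∂μK - ∫ u, f u ∂μL| ≤ c * (s₀ : ℝ) ^ ((ε - 1) / 2) := by
  obtain ⟨m, rfl⟩ : ∃ m, n = m + 1 := ⟨n - 1, by omega⟩
  set B : ℝ≥0∞ := 2 * (2 * (m + 1) * coordFaceBound m (3 * R))
  have hB : B ≠ ⊤ := by simp [B, coordFaceBound, ENNReal.mul_eq_top]
  refine ⟨4 * (m + 1 : ℕ) * B.toReal + 1, by positivity, ?_⟩
  intro K L hK hKc _ hKR hL hLc _ hLR μK μL hμK hμL s₀ hs₀ hmom f bf Lf hbf hLip hbL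
  have hμKB := hμK.measure_univ_le hK hKc hKR
  have hμLB := hμL.measure_univ_le hL hLc hLR
  have : IsFiniteMeasure μK := ⟨hμKB.trans_lt hB.lt_top⟩
  have : IsFiniteMeasure μL := ⟨hμLB.trans_lt hB.lt_top⟩
  obtain ⟨u₀, hu₀⟩ := (NormedSpace.sphere_nonempty (x := (0 : En (m + 1)))).2 zero_le_one
  have hLf : Lf.toNNReal ≤ 1 :=
    Real.toNNReal_le_one.2 (by linarith [(abs_nonneg _).trans (hbf ⟨u₀, hu₀⟩)])
  calc _ ≤ 4 * (m + 1 : ℕ) * B.toReal * Lf.toNNReal * (s₀ : ℝ) ^ (-(1 / 2 : ℝ)) :=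
        abs_integral_sub_integral_le_rpow_of_sphMoment_eq m.succ_pos
          (ENNReal.toReal_mono hB hμKB) (ENNReal.toReal_mono hB hμLB) hs₀ hmom
          (LipschitzWith.of_dist_le' hLip)
    _ ≤ (4 * (m + 1 : ℕ) * B.toReal + 1) * (s₀ : ℝ) ^ ((ε - 1) / 2) := by
        gcongr
        · calc _ ≤ 4 * (m + 1 : ℕ) * B.toReal * 1 := by gcongr; exact_mod_cast hLf
            _ ≤ _ := by linarith
        · exact_mod_cast hs₀
        · linarith

/-- there is a constant `c = c(n,R,ε) > 0` such that for convex
bodies `K, L ⊆ ℝⁿ` contained in a ball of radius `R` whose surface tensors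
coincide up to rank `s₀` (equivalently, the moments of their surface area
measures coincide up to order `s₀`), the Dudley (bounded-Lipschitz) distance of
the surface area measures is at most `c s₀^{(ε-1)/2}`. -/
theorem stmt12 {n : ℕ} (hn : 2 ≤ n) (R : ℝ) (hR : 0 < R)
    (ε : ℝ) (hε0 : 0 < ε) (hε1 : ε < 1) :
    ∃ c : ℝ, 0 < c ∧
      ∀ K L : Set (En n),
        Convex ℝ K → IsCompact K → K.Nonempty → K ⊆ Metric.closedBall 0 R →
        Convex ℝ L → IsCompact L → L.Nonempty → L ⊆ Metric.closedBall 0 R →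
      ∀ μK μL : Measure (Sph n),
        IsSurfaceAreaMeasure K μK → IsSurfaceAreaMeasure L μL →
      ∀ s₀ : ℕ, 1 ≤ s₀ →
        (∀ i : Fin n → ℕ, (∑ j, i j) ≤ s₀ → sphMoment μK i = sphMoment μL i) →
      ∀ (f : Sph n → ℝ) (bf Lf : ℝ),
        (∀ u, |f u| ≤ bf) → (∀ u v, |f u - f v| ≤ Lf * dist u v) →
        bf + Lf ≤ 1 →
        |∫ u, f u ∂μK - ∫ u, f u ∂μL| ≤ c * (s₀ : ℝ) ^ ((ε - 1) / 2) :=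
  stmt12_general hn R ε hε0
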